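/- arXiv:2403.15741 — 6 statements merged into one kernel-verified Lean document; each statement's English description precedes it below -/
import Mathlib

section
/- If 0 < t_1 < t_2 < … is a strictly increasing sequence of positive reals tending to infinity and Z(s) = ∑_{n=1}^∞ t_n^{-s} converges for all large real s, then t_1 = lim_{s→∞} Z(s)^{-1/s}. -/
/-! Normalising by the smallest term, `Z(s) = t₀^(-s) W(s)` with `W(s) = ∑ (tₙ/t₀)^(-s)`.
Every ratio `tₙ/t₀` is at least `1` and the first one equals `1`, so `1 ≤ W(s) ≤ W(S)` for
`s ≥ S`. A bounded factor disappears under the power `-1/s`, hence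
`Z(s)^(-1/s) = t₀ · W(s)^(-1/s) → t₀`. -/

open Filter Topology

theorem tendsto_rpow_nhds_one_of_mem_Icc {ι : Type*} {l : Filter ι} {f g : ι → ℝ} {a b : ℝ}
    (ha : 0 < a) (hf : ∀ᶠ i in l, f i ∈ Set.Icc a b) (hg : Tendsto g l (𝓝 0)) :
    Tendsto (fun i => f i ^ g i) l (𝓝 1) := by
  have hlog : IsBoundedUnder (· ≤ ·) l (norm ∘ fun i => Real.log (f i)) :=
    isBoundedUnder_of_eventually_le (a := max |Real.log a| |Real.log b|) <|
      hf.mono fun i ⟨hai, hib⟩ => abs_le_max_abs_abs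
        (Real.log_le_log ha hai) (Real.log_le_log (ha.trans_le hai) hib)
  have hexp := (Real.continuous_exp.tendsto 0).comp (isBoundedUnder_le_mul_tendsto_zero hlog hg)
  rw [Real.exp_zero] at hexp
  exact hexp.congr' (hf.mono fun i hi => (Real.rpow_def_of_pos (ha.trans_le hi.1) _).symm)

section

variable {u : ℕ → ℝ} {S s : ℝ}

theorem rpow_neg_le_rpow_neg_of_le (hu : ∀ n, 1 ≤ u n) (h : S ≤ s) (n : ℕ) :
    u n ^ (-s) ≤ u n ^ (-S) :=
  Real.rpow_le_rpow_of_exponent_le (hu n) (neg_le_neg h)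

theorem summable_rpow_neg_of_le (hu : ∀ n, 1 ≤ u n)
    (hS : Summable fun n => u n ^ (-S)) (h : S ≤ s) :
    Summable fun n => u n ^ (-s) :=
  hS.of_nonneg_of_le (fun n => Real.rpow_nonneg (zero_le_one.trans (hu n)) _)
    (rpow_neg_le_rpow_neg_of_le hu h)

theorem tsum_rpow_neg_mem_Icc (hu : ∀ n, 1 ≤ u n) (hu0 : u 0 = 1)
    (hS : Summable fun n => u n ^ (-S)) (h : S ≤ s) :
    ∑' n, u n ^ (-s) ∈ Set.Icc 1 (∑' n, u n ^ (-S)) := by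
  have hs := summable_rpow_neg_of_le hu hS h
  refine ⟨?_, hs.tsum_le_tsum (rpow_neg_le_rpow_neg_of_le hu h) hS⟩
  calc (1 : ℝ) = u 0 ^ (-s) := by rw [hu0, Real.one_rpow]
    _ ≤ ∑' n, u n ^ (-s) :=
      hs.le_tsum 0 fun n _ => Real.rpow_nonneg (zero_le_one.trans (hu n)) _

end

theorem rpow_neg_mul_rpow_neg_one_div {x w s : ℝ} (hx : 0 < x) (hw : 0 ≤ w) (hs : s ≠ 0) :
    (x ^ (-s) * w) ^ (-1 / s) = x * w ^ (-1 / s) := by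
  rw [Real.mul_rpow (Real.rpow_nonneg hx.le _) hw, ← Real.rpow_mul hx.le,
    show -s * (-1 / s) = 1 by field_simp, Real.rpow_one]

theorem stmt1_general (t : ℕ → ℝ) (hmono : StrictMono t) (hpos : ∀ n, 0 < t n)
    (hconv : ∃ S : ℝ, ∀ s : ℝ, S ≤ s → Summable (fun n : ℕ => (t n) ^ (-s))) :
    Tendsto (fun s : ℝ => (∑' n : ℕ, (t n) ^ (-s)) ^ (-1 / s)) atTop (𝓝 (t 0)) := by
  obtain ⟨S, hS⟩ := hconv
  have ht0 := hpos 0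
  have hdiv : ∀ (s : ℝ) n, (t n / t 0) ^ (-s) = t n ^ (-s) / t 0 ^ (-s) := fun s n =>
    Real.div_rpow (hpos n).le ht0.le _
  set W : ℝ → ℝ := fun s => ∑' n, (t n / t 0) ^ (-s)
  have hZ : ∀ s, ∑' n, t n ^ (-s) = t 0 ^ (-s) * W s := fun s => by
    simp only [W, hdiv, tsum_div_const]
    field_simp
  have hu : ∀ n, 1 ≤ t n / t 0 := fun n => (one_le_div ht0).2 (hmono.monotone n.zero_le)
  have hWS : Summable fun n => (t n / t 0) ^ (-S) := by
    simpa only [hdiv] using (hS S le_rfl).div_const _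
  have hW : ∀ᶠ s in atTop, W s ∈ Set.Icc 1 (W S) :=
    (eventually_ge_atTop S).mono fun s => tsum_rpow_neg_mem_Icc hu (div_self ht0.ne') hWS
  have hlim : Tendsto (fun s => t 0 * W s ^ (-1 / s)) atTop (𝓝 (t 0)) := by
    simpa using (tendsto_rpow_nhds_one_of_mem_Icc one_pos hW
      ((tendsto_const_nhds (x := (-1 : ℝ))).div_atTop tendsto_id)).const_mul (t 0)
  refine hlim.congr' ?_
  filter_upwards [hW, eventually_gt_atTop 0] with s hWs hs
  rw [hZ, rpow_neg_mul_rpow_neg_one_div ht0 (zero_le_one.trans hWs.1) hs.ne']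

/-- If `0 < t 0 < t 1 < …` tends to infinity and `Z(s) = ∑' n, (t n)^(-s)` converges
for all large real `s`, then the smallest term `t 0` (i.e. `t₁`) is recovered as
`lim_{s→∞} Z(s)^(-1/s)`. -/
theorem stmt1 (t : ℕ → ℝ) (hmono : StrictMono t) (hpos : ∀ n, 0 < t n)
    (htop : Tendsto t atTop atTop)
    (hconv : ∃ S : ℝ, ∀ s : ℝ, S ≤ s → Summable (fun n : ℕ => (t n) ^ (-s))) :
    Tendsto (fun s : ℝ => (∑' n : ℕ, (t n) ^ (-s)) ^ (-1 / s)) atTop (𝓝 (t 0)) :=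
  stmt1_general t hmono hpos hconv
end

section
/- If 0 < t_1 < t_2 < … is a strictly increasing sequence of positive reals tending to infinity with Z(s) = ∑ t_n^{-s} convergent for large real s, then for every n ≥ 0, t_{n+1} = lim_{s→∞} ( Z(s) − ∑_{k=1}^n t_k^{-s} )^{-1/s}. -/
open Filter Topology

/-- Recurrence extraction of zeros: with `t 0 < t 1 < …` positive tending to infinity
and `Z(s) = ∑' k, (t k)^(-s)` convergent for all large real `s`, for every `n`,
`t (n+1)` (with 1-based indexing `t_{n+1} = t n` here 0-based) satisfies
`t_{n+1} = lim_{s→∞} (Z(s) − ∑_{k<n} t_k^{-s})^{-1/s}`. -/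
theorem stmt2 (t : ℕ → ℝ) (hmono : StrictMono t) (hpos : ∀ n, 0 < t n)
    (htop : Tendsto t atTop atTop)
    (hconv : ∃ S : ℝ, ∀ s : ℝ, S ≤ s → Summable (fun k : ℕ => (t k) ^ (-s))) :
    ∀ n : ℕ, Tendsto
      (fun s : ℝ => ((∑' k : ℕ, (t k) ^ (-s)) - ∑ k ∈ Finset.range n, (t k) ^ (-s)) ^ (-1 / s))
      atTop (𝓝 (t n)) := by
  intro n
  obtain ⟨S, hS⟩ := hconv
  set S₀ : ℝ := max S 1 with hS₀def
  have hS₀1 : (1:ℝ) ≤ S₀ := le_max_right _ _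
  have htn : 0 < t n := hpos n
  have hsummS : ∀ s : ℝ, S₀ ≤ s → Summable (fun i : ℕ => t (i + n) ^ (-s)) := by
    intro s hs
    exact (summable_nat_add_iff n).2 (hS s ((le_max_left _ _).trans hs))
  set C : ℝ := ∑' i : ℕ, t (i + n) ^ (-S₀) with hCdef
  have hCge : t n ^ (-S₀) ≤ C := by
    have := Summable.le_tsum (hsummS S₀ le_rfl) 0
      (fun i _ => Real.rpow_nonneg (hpos _).le _)
    simpa using this
  have hCpos : 0 < C := lt_of_lt_of_le (Real.rpow_pos_of_pos htn _) hCge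
  set C' : ℝ := C * t n ^ S₀ with hC'def
  have hC'pos : 0 < C' := mul_pos hCpos (Real.rpow_pos_of_pos htn _)
  -- key bounds for s ≥ S₀
  have key : ∀ s : ℝ, S₀ ≤ s →
      C' ^ (-1/s) * t n ≤
        ((∑' k : ℕ, (t k) ^ (-s)) - ∑ k ∈ Finset.range n, (t k) ^ (-s)) ^ (-1 / s) ∧
      ((∑' k : ℕ, (t k) ^ (-s)) - ∑ k ∈ Finset.range n, (t k) ^ (-s)) ^ (-1 / s) ≤ t n := by
    intro s hs
    have hspos : 0 < s := lt_of_lt_of_le one_pos (hS₀1.trans hs)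
    have hsum := hsummS s hs
    have heq : (∑' k : ℕ, (t k) ^ (-s)) - ∑ k ∈ Finset.range n, (t k) ^ (-s)
        = ∑' i : ℕ, t (i + n) ^ (-s) := by
      have := Summable.sum_add_tsum_nat_add (f := fun k : ℕ => t k ^ (-s)) n
        (hS s ((le_max_left _ _).trans hs))
      linarith
    set R : ℝ := ∑' i : ℕ, t (i + n) ^ (-s) with hRdef
    have hlow : t n ^ (-s) ≤ R := by
      have := Summable.le_tsum hsum 0 (fun i _ => Real.rpow_nonneg (hpos _).le _)
      simpa using this
    have hRpos : 0 < R := lt_of_lt_of_le (Real.rpow_pos_of_pos htn _) hlow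
    have hhigh : R ≤ C' * t n ^ (-s) := by
      have hterm : ∀ i : ℕ, t (i + n) ^ (-s) ≤ t (i + n) ^ (-S₀) * t n ^ (-(s - S₀)) := by
        intro i
        have h1 : t n ≤ t (i + n) := hmono.monotone (Nat.le_add_left n i)
        have : t (i + n) ^ (-s) = t (i + n) ^ (-S₀) * t (i + n) ^ (-(s - S₀)) := by
          rw [← Real.rpow_add (hpos _)]; ring_nf
        rw [this]
        exact mul_le_mul_of_nonneg_left
          (Real.rpow_le_rpow_of_nonpos htn h1 (by simp; linarith))
          (Real.rpow_nonneg (hpos _).le _)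
      have hsum2 : Summable (fun i : ℕ => t (i + n) ^ (-S₀) * t n ^ (-(s - S₀))) :=
        (hsummS S₀ le_rfl).mul_right _
      have := Summable.tsum_le_tsum hterm hsum hsum2
      rw [tsum_mul_right] at this
      calc R ≤ C * t n ^ (-(s - S₀)) := this
        _ = C' * t n ^ (-s) := by
            rw [hC'def, mul_assoc, ← Real.rpow_add htn]; ring_nf
    rw [heq]
    constructor
    · have h1 : R ^ (-1/s) ≥ (C' * t n ^ (-s)) ^ (-1/s) :=
        Real.rpow_le_rpow_of_nonpos hRpos hhigh
          (by rw [neg_div]; exact neg_nonpos.2 (by positivity))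
      have h2 : (C' * t n ^ (-s)) ^ (-1/s) = C' ^ (-1/s) * t n := by
        rw [Real.mul_rpow hC'pos.le (Real.rpow_nonneg htn.le _),
          ← Real.rpow_mul htn.le, show (-s) * (-1/s) = 1 by field_simp, Real.rpow_one]
      rw [← h2]; exact h1
    · have h1 : R ^ (-1/s) ≤ (t n ^ (-s)) ^ (-1/s) :=
        Real.rpow_le_rpow_of_nonpos (Real.rpow_pos_of_pos htn _) hlow
          (by rw [neg_div]; exact neg_nonpos.2 (by positivity))
      have h2 : ((t n : ℝ) ^ (-s)) ^ (-1/s) = t n := by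
        rw [← Real.rpow_mul htn.le, show (-s) * (-1/s) = 1 by field_simp, Real.rpow_one]
      rw [h2] at h1; exact h1
  -- limits of the bounding functions
  have hinv : Tendsto (fun s : ℝ => -1 / s) atTop (𝓝 0) := by
    have : Tendsto (fun s : ℝ => -s⁻¹) atTop (𝓝 (-0)) := tendsto_inv_atTop_zero.neg
    simp only [neg_zero] at this
    simpa [neg_div, one_div] using this
  have hCpow : Tendsto (fun s : ℝ => C' ^ (-1/s)) atTop (𝓝 1) := by
    have := Filter.Tendsto.rpow (tendsto_const_nhds (x := C') (f := atTop))
      hinv (Or.inl hC'pos.ne')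
    simpa using this
  have hlowTend : Tendsto (fun s : ℝ => C' ^ (-1/s) * t n) atTop (𝓝 (t n)) := by
    have := hCpow.mul_const (t n)
    simpa using this
  refine tendsto_of_tendsto_of_tendsto_of_le_of_le' hlowTend tendsto_const_nhds ?_ ?_
  · filter_upwards [eventually_ge_atTop S₀] with s hs using (key s hs).1
  · filter_upwards [eventually_ge_atTop S₀] with s hs using (key s hs).2
end

section
/- For real s > 1 and every integer m ≥ 1, the m-th derivative of log ζ(s) equals ∑_{n=1}^∞ n^{m−1} P^{(m)}(ns), where P^{(m)} is the m-th derivative of the prime zeta function P(s) = ∑_p p^{-s}. -/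
noncomputable def primeZeta (s : ℝ) : ℝ := ∑' p : Nat.Primes, (((p : ℕ) : ℝ)) ^ (-s)

namespace Stmt8

open Real Filter Topology

noncomputable def g (m : ℕ) (x : ℝ) : ℝ :=
  ∑' p : Nat.Primes, (-Real.log ((p : ℕ) : ℝ)) ^ m * (((p : ℕ) : ℝ)) ^ (-x)

lemma summable_nat (m : ℕ) {x : ℝ} (hx : 1 < x) :
    Summable (fun n : ℕ => (Real.log n) ^ m * (n : ℝ) ^ (-x)) := by
  set r : ℝ := (1 + x) / 2 with hr
  have hr1 : 1 < r := by rw [hr]; linarith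
  have hrx : r < x := by rw [hr]; linarith
  have h1 : (fun t : ℝ => (Real.log t) ^ (m : ℝ)) =o[atTop] fun t : ℝ => t ^ (x - r) :=
    isLittleO_log_rpow_rpow_atTop (m : ℝ) (by linarith)
  have h2 : (fun n : ℕ => (Real.log n) ^ (m : ℝ)) =o[atTop] fun n : ℕ => (n : ℝ) ^ (x - r) :=
    h1.comp_tendsto tendsto_natCast_atTop_atTop
  have hev : ∀ᶠ n : ℕ in atTop, ‖(Real.log n) ^ m * (n : ℝ) ^ (-x)‖ ≤ 1 * ‖(n : ℝ) ^ (-r)‖ := by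
    filter_upwards [h2.def one_pos, eventually_ge_atTop 1] with n hn hn1
    have hn0 : (1 : ℝ) ≤ (n : ℝ) := by exact_mod_cast hn1
    have hnp : (0 : ℝ) < (n : ℝ) := by linarith
    have hlog : 0 ≤ Real.log n := Real.log_nonneg hn0
    simp only [Real.norm_eq_abs, one_mul] at hn ⊢
    rw [abs_of_nonneg (Real.rpow_nonneg (le_of_lt hnp) _),
      abs_of_nonneg (Real.rpow_nonneg hlog _), Real.rpow_natCast] at hn
    rw [abs_of_nonneg (mul_nonneg (pow_nonneg hlog m) (Real.rpow_nonneg hnp.le _)),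
      abs_of_nonneg (Real.rpow_nonneg hnp.le _)]
    calc (Real.log n) ^ m * (n : ℝ) ^ (-x) ≤ (n : ℝ) ^ (x - r) * (n : ℝ) ^ (-x) :=
          mul_le_mul_of_nonneg_right hn (Real.rpow_nonneg hnp.le _)
      _ = (n : ℝ) ^ (-r) := by
          rw [← Real.rpow_add hnp]; ring_nf
  have hO : (fun n : ℕ => (Real.log n) ^ m * (n : ℝ) ^ (-x)) =O[atTop]
      fun n : ℕ => (n : ℝ) ^ (-r) := Asymptotics.IsBigO.of_bound 1 hev
  exact summable_of_isBigO_nat (Real.summable_nat_rpow.mpr (by linarith)) hO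

lemma summable_g (m : ℕ) {x : ℝ} (hx : 1 < x) :
    Summable (fun p : Nat.Primes => (Real.log ((p : ℕ) : ℝ)) ^ m * (((p : ℕ) : ℝ)) ^ (-x)) :=
  (summable_nat m hx).comp_injective (fun _ _ h => Subtype.ext h)

lemma summable_g' (m : ℕ) {x : ℝ} (hx : 1 < x) :
    Summable (fun p : Nat.Primes => (-Real.log ((p : ℕ) : ℝ)) ^ m * (((p : ℕ) : ℝ)) ^ (-x)) := by
  refine ((summable_g m hx).mul_left ((-1 : ℝ) ^ m)).congr fun p => ?_
  rw [neg_pow]; ring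

lemma prime_two_le (p : Nat.Primes) : (2 : ℝ) ≤ ((p : ℕ) : ℝ) := by
  exact_mod_cast p.prop.two_le

lemma prime_pos (p : Nat.Primes) : (0 : ℝ) < ((p : ℕ) : ℝ) := by
  linarith [prime_two_le p]

lemma log_prime_nonneg (p : Nat.Primes) : 0 ≤ Real.log ((p : ℕ) : ℝ) :=
  Real.log_nonneg (by linarith [prime_two_le p])

lemma g_bound (m : ℕ) {a y : ℝ} (ha : 1 < a) (hy : a ≤ y) :
    |g m y| ≤ (2 : ℝ) ^ (a - y) *
      ∑' p : Nat.Primes, (Real.log ((p : ℕ) : ℝ)) ^ m * (((p : ℕ) : ℝ)) ^ (-a) := by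
  have hsum := ((summable_g m ha).hasSum.mul_left ((2 : ℝ) ^ (a - y)))
  have key : ∀ p : Nat.Primes,
      ‖(-Real.log ((p : ℕ) : ℝ)) ^ m * (((p : ℕ) : ℝ)) ^ (-y)‖ ≤
        (2 : ℝ) ^ (a - y) * ((Real.log ((p : ℕ) : ℝ)) ^ m * (((p : ℕ) : ℝ)) ^ (-a)) := by
    intro p
    have hp0 := prime_pos p
    have hl := log_prime_nonneg p
    rw [Real.norm_eq_abs, abs_mul, abs_pow, abs_neg,
      abs_of_nonneg hl, abs_of_nonneg (Real.rpow_nonneg hp0.le _)]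
    have hkey : (((p : ℕ) : ℝ)) ^ (-y) ≤ (2 : ℝ) ^ (a - y) * (((p : ℕ) : ℝ)) ^ (-a) := by
      have h1 : (((p : ℕ) : ℝ)) ^ (-y) = (((p : ℕ) : ℝ)) ^ (a - y) * (((p : ℕ) : ℝ)) ^ (-a) := by
        rw [← Real.rpow_add hp0]; ring_nf
      rw [h1]
      exact mul_le_mul_of_nonneg_right
        (Real.rpow_le_rpow_of_nonpos two_pos (prime_two_le p) (by linarith))
        (Real.rpow_nonneg hp0.le _)
    calc (Real.log ((p : ℕ) : ℝ)) ^ m * (((p : ℕ) : ℝ)) ^ (-y)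
        ≤ (Real.log ((p : ℕ) : ℝ)) ^ m * ((2 : ℝ) ^ (a - y) * (((p : ℕ) : ℝ)) ^ (-a)) :=
          mul_le_mul_of_nonneg_left hkey (pow_nonneg hl m)
      _ = (2 : ℝ) ^ (a - y) * ((Real.log ((p : ℕ) : ℝ)) ^ m * (((p : ℕ) : ℝ)) ^ (-a)) := by ring
  have := tsum_of_norm_bounded hsum key
  rwa [Real.norm_eq_abs] at this

lemma hasDerivAt_gterm (p : Nat.Primes) (m : ℕ) (x : ℝ) :
    HasDerivAt (fun y : ℝ => (-Real.log ((p : ℕ) : ℝ)) ^ m * (((p : ℕ) : ℝ)) ^ (-y))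
      ((-Real.log ((p : ℕ) : ℝ)) ^ (m + 1) * (((p : ℕ) : ℝ)) ^ (-x)) x := by
  have hp0 := prime_pos p
  have h1 : HasDerivAt (fun y : ℝ => (((p : ℕ) : ℝ)) ^ (-y))
      ((((p : ℕ) : ℝ)) ^ (-x) * Real.log ((p : ℕ) : ℝ) * (-1)) x :=
    ((Real.hasStrictDerivAt_const_rpow hp0 (-x)).hasDerivAt).comp x (hasDerivAt_neg x)
  have h2 := h1.const_mul ((-Real.log ((p : ℕ) : ℝ)) ^ m)
  refine h2.congr_deriv ?_
  rw [pow_succ]; ring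

lemma hasDerivAt_g (m : ℕ) {x : ℝ} (hx : 1 < x) : HasDerivAt (g m) (g (m + 1) x) x := by
  set a : ℝ := (1 + x) / 2 with ha'
  have ha : 1 < a := by rw [ha']; linarith
  have hax : a < x := by rw [ha']; linarith
  refine hasDerivAt_tsum_of_isPreconnected (F := ℝ)
    (u := fun p : Nat.Primes => (Real.log ((p : ℕ) : ℝ)) ^ (m + 1) * (((p : ℕ) : ℝ)) ^ (-a))
    (summable_g (m + 1) ha) isOpen_Ioi isPreconnected_Ioi
    (fun p y _ => hasDerivAt_gterm p m y) (fun p y hy => ?_)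
    (show x ∈ Set.Ioi a from hax) (summable_g' m hx) (show x ∈ Set.Ioi a from hax)
  have hp0 := prime_pos p
  have hl := log_prime_nonneg p
  rw [Real.norm_eq_abs, abs_mul, abs_pow, abs_neg, abs_of_nonneg hl,
    abs_of_nonneg (Real.rpow_nonneg hp0.le _)]
  exact mul_le_mul_of_nonneg_left
    (Real.rpow_le_rpow_of_exponent_le (by linarith [prime_two_le p]) (by simp at hy ⊢; linarith))
    (pow_nonneg hl _)

lemma iteratedDeriv_primeZeta (m : ℕ) : ∀ {x : ℝ}, 1 < x →
    iteratedDeriv m primeZeta x = g m x := by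
  induction m with
  | zero =>
    intro x hx
    simp only [iteratedDeriv_zero, primeZeta, g, pow_zero, one_mul]
  | succ m ih =>
    intro x hx
    rw [iteratedDeriv_succ]
    have heq : iteratedDeriv m primeZeta =ᶠ[𝓝 x] g m := by
      filter_upwards [isOpen_Ioi.mem_nhds (show x ∈ Set.Ioi 1 from hx)] with y hy
      exact ih hy
    rw [heq.deriv_eq, (hasDerivAt_g m hx).deriv]

noncomputable def hh (m : ℕ) (x : ℝ) : ℝ :=
  ∑' n : ℕ+, ((n : ℕ) : ℝ) ^ ((m : ℤ) - 1) * g m (((n : ℕ) : ℝ) * x)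

noncomputable def C (m : ℕ) (a : ℝ) : ℝ :=
  ∑' p : Nat.Primes, (Real.log ((p : ℕ) : ℝ)) ^ m * (((p : ℕ) : ℝ)) ^ (-a)

lemma C_nonneg (m : ℕ) (a : ℝ) : 0 ≤ C m a :=
  tsum_nonneg fun p => mul_nonneg (pow_nonneg (log_prime_nonneg p) m)
    (Real.rpow_nonneg (prime_pos p).le _)

lemma summable_u (k : ℕ) {a : ℝ} (ha : 0 < a) (c : ℝ) :
    Summable (fun n : ℕ+ => c * (((n : ℕ) : ℝ) ^ k * ((2 : ℝ) ^ (-a)) ^ (n : ℕ))) := by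
  have h0 : ‖(2 : ℝ) ^ (-a)‖ < 1 := by
    rw [Real.norm_eq_abs, abs_of_pos (Real.rpow_pos_of_pos two_pos _)]
    exact Real.rpow_lt_one_of_one_lt_of_neg one_lt_two (by linarith)
  have h1 := summable_pow_mul_geometric_of_norm_lt_one (R := ℝ) k h0
  exact (h1.comp_injective (fun a b h => PNat.coe_injective h)).mul_left c

lemma hterm_bound (m : ℕ) (j : ℤ) (k : ℕ) (hj : j ≤ (k : ℤ)) {a y : ℝ}
    (ha : 1 < a) (hy : a ≤ y) (n : ℕ+) :
    ‖((n : ℕ) : ℝ) ^ j * g m (((n : ℕ) : ℝ) * y)‖ ≤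
      ((2 : ℝ) ^ a * C m a) * (((n : ℕ) : ℝ) ^ k * ((2 : ℝ) ^ (-a)) ^ (n : ℕ)) := by
  have hn1 : (1 : ℝ) ≤ ((n : ℕ) : ℝ) := by exact_mod_cast n.one_le
  have hn0 : (0 : ℝ) < ((n : ℕ) : ℝ) := by linarith
  have hny : a ≤ ((n : ℕ) : ℝ) * y := le_trans hy (le_mul_of_one_le_left (by linarith) hn1)
  have h1 : |g m (((n : ℕ) : ℝ) * y)| ≤ (2 : ℝ) ^ (a - ((n : ℕ) : ℝ) * y) * C m a :=
    g_bound m ha hny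
  have h2 : (2 : ℝ) ^ (a - ((n : ℕ) : ℝ) * y) ≤ (2 : ℝ) ^ a * ((2 : ℝ) ^ (-a)) ^ (n : ℕ) := by
    have he : (2 : ℝ) ^ a * ((2 : ℝ) ^ (-a)) ^ (n : ℕ) = (2 : ℝ) ^ (a + (-a) * (n : ℕ)) := by
      rw [Real.rpow_add two_pos, ← Real.rpow_natCast ((2:ℝ) ^ (-a)) (n : ℕ), ← Real.rpow_mul (by norm_num)]
    rw [he]
    apply Real.rpow_le_rpow_of_exponent_le one_le_two
    have : a * ((n : ℕ) : ℝ) ≤ ((n : ℕ) : ℝ) * y := by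
      rw [mul_comm]
      exact mul_le_mul_of_nonneg_left hy (by linarith)
    linarith
  have hzp : ((n : ℕ) : ℝ) ^ j ≤ ((n : ℕ) : ℝ) ^ (k : ℤ) := zpow_le_zpow_right₀ hn1 hj
  have hzpos : (0 : ℝ) < ((n : ℕ) : ℝ) ^ j := zpow_pos hn0 j
  rw [Real.norm_eq_abs, abs_mul, abs_of_pos hzpos]
  calc ((n : ℕ) : ℝ) ^ j * |g m (((n : ℕ) : ℝ) * y)|
      ≤ ((n : ℕ) : ℝ) ^ (k : ℤ) * ((2 : ℝ) ^ a * ((2 : ℝ) ^ (-a)) ^ (n : ℕ) * C m a) := by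
        apply mul_le_mul hzp (h1.trans ?_) (abs_nonneg _) (zpow_nonneg hn0.le _)
        exact mul_le_mul_of_nonneg_right h2 (C_nonneg m a)
    _ = ((2 : ℝ) ^ a * C m a) * (((n : ℕ) : ℝ) ^ k * ((2 : ℝ) ^ (-a)) ^ (n : ℕ)) := by
        rw [zpow_natCast]; ring

lemma hasDerivAt_hterm (m : ℕ) (n : ℕ+) {x : ℝ} (hx : 1 < x) :
    HasDerivAt (fun y : ℝ => ((n : ℕ) : ℝ) ^ ((m : ℤ) - 1) * g m (((n : ℕ) : ℝ) * y))
      (((n : ℕ) : ℝ) ^ (((m + 1 : ℕ) : ℤ) - 1) * g (m + 1) (((n : ℕ) : ℝ) * x)) x := by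
  have hn1 : (1 : ℝ) ≤ ((n : ℕ) : ℝ) := by exact_mod_cast n.one_le
  have hnx : 1 < ((n : ℕ) : ℝ) * x :=
    lt_of_lt_of_le hx (le_mul_of_one_le_left (by linarith) hn1)
  have h1 : HasDerivAt (fun y : ℝ => ((n : ℕ) : ℝ) * y) (((n : ℕ) : ℝ) * 1) x :=
    (hasDerivAt_id x).const_mul ((n : ℕ) : ℝ)
  have h2 := (hasDerivAt_g m hnx).comp x h1
  have h3 := h2.const_mul (((n : ℕ) : ℝ) ^ ((m : ℤ) - 1))
  refine h3.congr_deriv ?_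
  have hn0 : ((n : ℕ) : ℝ) ≠ 0 := by positivity
  rw [show ((m + 1 : ℕ) : ℤ) - 1 = ((m : ℤ) - 1) + 1 by push_cast; ring, zpow_add_one₀ hn0]
  ring

lemma hasDerivAt_hh (m : ℕ) {x : ℝ} (hx : 1 < x) : HasDerivAt (hh m) (hh (m + 1) x) x := by
  set a : ℝ := (1 + x) / 2 with ha'
  have ha : 1 < a := by rw [ha']; linarith
  have hax : a < x := by rw [ha']; linarith
  refine hasDerivAt_tsum_of_isPreconnected (F := ℝ)
    (u := fun n : ℕ+ => ((2 : ℝ) ^ a * C (m + 1) a) *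
      (((n : ℕ) : ℝ) ^ (m + 1) * ((2 : ℝ) ^ (-a)) ^ (n : ℕ)))
    (summable_u (m + 1) (by linarith) _) isOpen_Ioi isPreconnected_Ioi
    (fun n y hy => hasDerivAt_hterm m n (lt_trans ha hy))
    (fun n y hy => hterm_bound (m + 1) _ (m + 1) (by push_cast; omega) ha (le_of_lt hy) n)
    (show x ∈ Set.Ioi a from hax) ?_ (show x ∈ Set.Ioi a from hax)
  exact Summable.of_norm_bounded (summable_u m (by linarith) ((2 : ℝ) ^ a * C m a))
    (fun n => hterm_bound m _ m (by omega) ha hax.le n)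

lemma iteratedDeriv_hh (m : ℕ) : ∀ {x : ℝ}, 1 < x →
    iteratedDeriv m (hh 0) x = hh m x := by
  induction m with
  | zero => intro x hx; simp [iteratedDeriv_zero]
  | succ m ih =>
    intro x hx
    rw [iteratedDeriv_succ]
    have heq : iteratedDeriv m (hh 0) =ᶠ[𝓝 x] hh m := by
      filter_upwards [isOpen_Ioi.mem_nhds (show x ∈ Set.Ioi 1 from hx)] with y hy
      exact ih hy
    rw [heq.deriv_eq, (hasDerivAt_hh m hx).deriv]

lemma log_zeta_eq {x : ℝ} (hx : 1 < x) :
    Real.log ((riemannZeta (x : ℂ)).re) = hh 0 x := by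
  have hx' : 1 < (x : ℂ).re := by simpa using hx
  set f := riemannZetaSummandHom (Complex.ne_zero_of_one_lt_re hx') with hf
  have hfp : ∀ p : Nat.Primes, f ((p : ℕ)) = (((((p : ℕ) : ℝ)) ^ (-x) : ℝ) : ℂ) := by
    intro p
    rw [hf]
    simp only [riemannZetaSummandHom, MonoidWithZeroHom.coe_mk, ZeroHom.coe_mk]
    rw [Complex.ofReal_cpow (Nat.cast_nonneg _)]
    push_cast
    rfl
  have hlt : ∀ p : Nat.Primes, (((p : ℕ) : ℝ)) ^ (-x) < 1 := fun p =>
    Real.rpow_lt_one_of_one_lt_of_neg (by linarith [prime_two_le p]) (by linarith)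
  have hpos : ∀ p : Nat.Primes, 0 < (((p : ℕ) : ℝ)) ^ (-x) := fun p =>
    Real.rpow_pos_of_pos (prime_pos p) _
  have hlogp : ∀ p : Nat.Primes, -Complex.log (1 - f ((p : ℕ))) =
      ((-Real.log (1 - (((p : ℕ) : ℝ)) ^ (-x)) : ℝ) : ℂ) := by
    intro p
    rw [hfp p, ← Complex.ofReal_one, ← Complex.ofReal_sub,
      ← Complex.ofReal_log (by linarith [hlt p]), ← Complex.ofReal_neg]
  set S : ℝ := ∑' p : Nat.Primes, -Real.log (1 - (((p : ℕ) : ℝ)) ^ (-x)) with hS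
  have hzeta : riemannZeta (x : ℂ) = Complex.ofReal (Real.exp S) := by
    have h1 := EulerProduct.exp_tsum_primes_log_eq_tsum (f := f) (summable_riemannZetaSummand hx')
    rw [tsum_riemannZetaSummand hx'] at h1
    rw [← h1, tsum_congr hlogp, ← Complex.ofReal_tsum, ← Complex.ofReal_exp, hS]
  have hre : Real.log ((riemannZeta (x : ℂ)).re) = S := by
    rw [hzeta, Complex.ofReal_re, Real.log_exp]
  rw [hre]
  -- now expand S as a double sum and swap
  have hasS : ∀ p : Nat.Primes, HasSum (fun k : ℕ => ((((p : ℕ) : ℝ)) ^ (-x)) ^ (k + 1) / (k + 1))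
      (-Real.log (1 - (((p : ℕ) : ℝ)) ^ (-x))) := fun p =>
    Real.hasSum_pow_div_log_of_abs_lt_one (by rw [abs_of_pos (hpos p)]; exact hlt p)
  set F : Nat.Primes → ℕ → ℝ := fun p k => ((((p : ℕ) : ℝ)) ^ (-x)) ^ (k + 1) / (k + 1) with hF
  have hsumlog : Summable (fun p : Nat.Primes => -Real.log (1 - (((p : ℕ) : ℝ)) ^ (-x))) := by
    have hc : Summable (fun p : Nat.Primes => -Complex.log (1 - f ((p : ℕ)))) :=
      ((summable_riemannZetaSummand hx').of_norm.clog_one_sub).neg.subtype {p | p.Prime}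
    have hre2 := hc.mapL Complex.reCLM
    refine hre2.congr fun p => ?_
    rw [Complex.reCLM_apply, hlogp p, Complex.ofReal_re]
  have huncurry : Summable (Function.uncurry F) := by
    refine (summable_prod_of_nonneg ?_).mpr ⟨fun p => (hasS p).summable, ?_⟩
    · intro q
      exact div_nonneg (pow_nonneg (hpos q.1).le _) (by positivity)
    · exact hsumlog.congr fun p => ((hasS p).tsum_eq).symm
  have hswap : S = ∑' k : ℕ, ∑' p : Nat.Primes, F p k := by
    rw [hS]
    rw [tsum_congr (fun p => ((hasS p).tsum_eq).symm)]
    exact (Summable.tsum_comm huncurry).symm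
  rw [hswap]
  have hinner : ∀ k : ℕ, (∑' p : Nat.Primes, F p k) =
      (((k : ℝ) + 1))⁻¹ * g 0 (((k : ℝ) + 1) * x) := by
    intro k
    have hterm : ∀ p : Nat.Primes, F p k =
        (((k : ℝ) + 1))⁻¹ * (((p : ℕ) : ℝ)) ^ (-(((k : ℝ) + 1) * x)) := by
      intro p
      rw [hF]
      simp only []
      rw [← Real.rpow_natCast ((((p : ℕ) : ℝ)) ^ (-x)) (k + 1),
        ← Real.rpow_mul (prime_pos p).le]
      push_cast
      rw [show -x * ((k : ℝ) + 1) = -(((k : ℝ) + 1) * x) by ring, div_eq_inv_mul]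
    rw [tsum_congr hterm, tsum_mul_left]
    congr 1
    rw [g]
    exact (tsum_congr fun p => by rw [pow_zero, one_mul]).symm
  rw [tsum_congr hinner, hh]
  rw [← Equiv.tsum_eq (Equiv.pnatEquivNat.symm)
    (fun n : ℕ+ => ((n : ℕ) : ℝ) ^ (((0 : ℕ) : ℤ) - 1) * g 0 (((n : ℕ) : ℝ) * x))]
  refine tsum_congr fun k => ?_
  simp only [Equiv.pnatEquivNat_symm_apply, Nat.succPNat_coe]
  push_cast
  rw [zpow_neg_one]

end Stmt8

/-- For real `s > 1` and `m ≥ 1`: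
`(log ζ)^{(m)}(s) = ∑_{n=1}^∞ n^{m−1} P^{(m)}(n s)`. -/
theorem stmt8 (m : ℕ) (hm : 1 ≤ m) (s : ℝ) (hs : 1 < s) :
    iteratedDeriv m (fun x : ℝ => Real.log ((riemannZeta (x : ℂ)).re)) s
      = ∑' n : ℕ+, (n : ℝ) ^ (m - 1) * iteratedDeriv m primeZeta ((n : ℝ) * s) := by
  have hE : (fun x : ℝ => Real.log ((riemannZeta (x : ℂ)).re)) =ᶠ[nhds s] Stmt8.hh 0 := by
    filter_upwards [isOpen_Ioi.mem_nhds (show s ∈ Set.Ioi 1 from hs)] with y hy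
    exact Stmt8.log_zeta_eq hy
  rw [hE.iteratedDeriv_eq m, Stmt8.iteratedDeriv_hh m hs, Stmt8.hh]
  refine tsum_congr fun n => ?_
  have hn1 : (1 : ℝ) ≤ ((n : ℕ) : ℝ) := by exact_mod_cast n.one_le
  have hns : 1 < ((n : ℕ) : ℝ) * s :=
    lt_of_lt_of_le hs (le_mul_of_one_le_left (by linarith) hn1)
  rw [show ((n : ℝ)) * s = ((n : ℕ) : ℝ) * s by norm_cast]
  rw [Stmt8.iteratedDeriv_primeZeta m hns]
  congr 1
  rw [show (m : ℤ) - 1 = ((m - 1 : ℕ) : ℤ) by omega, zpow_natCast]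
end

section
/- Define the eta coefficients by the Laurent expansion −ζ'(s)/ζ(s) = 1/(s−1) + ∑_{n=0}^∞ η_n (s−1)^n near s = 1, and the Stieltjes constants γ_n by ζ(s) = 1/(s−1) + ∑_{n=0}^∞ ((−1)^n/n!) γ_n (s−1)^n. Then for all n ≥ 0, η_n = (−1)^{n+1} [ ((n+1)/n!) γ_n + ∑_{k=0}^{n−1} ((−1)^{k−1}/(n−k−1)!) η_k γ_{n−k−1} ]. -/
/-!
Put `z = s - 1`, `A(z) = ∑ η_n z^n` and `G(z) = ∑ b_n z^n` with `b_n = (-1)^n γ_n / n!`, so that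
`ζ(1 + z) = 1/z + G(z)` and `-ζ'/ζ(1 + z) = 1/z + A(z)`. Since `ζ' = G' - 1/z²`, multiplying
`-ζ' = (1/z + A)(1/z + G)` by `z` gives `z G' = -(A + G + z A G)` on a punctured disc. Comparing
coefficients of `z^n` (Cauchy product on the right) yields
`n b_n = -(η_n + b_n + ∑_{k<n} η_k b_{n-k-1})`, which is the claimed formula for `η_n`.
-/

open Filter Topology Metric FormalMultilinearSeries

def HasPuncturedPowerSeries (f : ℂ → ℂ) (c : ℕ → ℂ) : Prop :=
  ∀ᶠ z in 𝓝[≠] (0 : ℂ), HasSum (fun n => c n * z ^ n) (f z)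

theorem le_radius_ofScalars_of_summable {𝕜 : Type*} [NontriviallyNormedField 𝕜] {c : ℕ → 𝕜}
    {w : 𝕜} (hs : Summable fun n => c n * w ^ n) : (‖w‖₊ : ENNReal) ≤ (ofScalars 𝕜 c).radius := by
  refine (ofScalars 𝕜 c).le_radius_of_tendsto (l := 0) ?_
  simpa [ofScalars_norm, norm_mul, norm_pow] using hs.tendsto_atTop_zero.norm

theorem hasSum_mul_deriv_ofScalarsSum {c : ℕ → ℂ} {z : ℂ}
    (hz : (‖z‖₊ : ENNReal) < (ofScalars ℂ c).radius) :
    HasSum (fun n => n * c n * z ^ n) (z * deriv (ofScalars ℂ c).sum z) := by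
  have hF := (ofScalars ℂ c).hasFPowerSeriesOnBall (pos_of_gt hz)
  have hz' : z ∈ eball (0 : ℂ) (ofScalars ℂ c).radius := by
    rwa [mem_eball, edist_zero_right, enorm_eq_nnnorm]
  have h := (hF.fderiv.hasSum hz').mapL (ContinuousLinearMap.apply ℂ ℂ z)
  simp only [ContinuousLinearMap.apply_apply, derivSeries_apply_diag, ofScalars_apply_eq,
    zero_add] at h
  have hderiv : fderiv ℂ (ofScalars ℂ c).sum z z = z * deriv (ofScalars ℂ c).sum z := by
    rw [← fderiv_apply_one_eq_deriv, ← smul_eq_mul, ← map_smul, smul_eq_mul, mul_one]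
  have h' : HasSum (fun n => ((n + 1 : ℕ) : ℂ) * c (n + 1) * z ^ (n + 1))
      (z * deriv (ofScalars ℂ c).sum z) := by
    simpa only [hderiv, nsmul_eq_mul, smul_eq_mul, mul_assoc] using h
  simpa using HasSum.zero_add (f := fun n : ℕ => (n : ℂ) * c n * z ^ n) h'

namespace HasPuncturedPowerSeries

variable {f g : ℂ → ℂ} {c d : ℕ → ℂ}

theorem radius_pos (h : HasPuncturedPowerSeries f c) : 0 < (ofScalars ℂ c).radius := by
  obtain ⟨w, hw, hw0⟩ := (h.and self_mem_nhdsWithin).exists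
  exact (by simpa using hw0 : (0 : ENNReal) < ‖w‖₊).trans_le
    (le_radius_ofScalars_of_summable hw.summable)

theorem eventuallyEq_ofScalarsSum (h : HasPuncturedPowerSeries f c) :
    f =ᶠ[𝓝[≠] 0] (ofScalars ℂ c).sum := by
  filter_upwards [h] with z hz
  simp only [FormalMultilinearSeries.sum, ofScalars_apply_eq, smul_eq_mul, hz.tsum_eq]

theorem unique (hf : HasPuncturedPowerSeries f c) (hg : HasPuncturedPowerSeries g d)
    (hfg : f =ᶠ[𝓝[≠] 0] g) : c = d := by
  have hc := ((ofScalars ℂ c).hasFPowerSeriesOnBall hf.radius_pos).hasFPowerSeriesAt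
  have hd := ((ofScalars ℂ d).hasFPowerSeriesOnBall hg.radius_pos).hasFPowerSeriesAt
  have hcd : (ofScalars ℂ c).sum =ᶠ[𝓝 0] (ofScalars ℂ d).sum :=
    (hc.analyticAt.frequently_eq_iff_eventually_eq hd.analyticAt).1
      (hf.eventuallyEq_ofScalarsSum.symm.trans (hfg.trans hg.eventuallyEq_ofScalarsSum)).frequently
  exact ofScalars_series_injective ℂ ℂ (hc.eq_formalMultilinearSeries (hd.congr hcd.symm))

theorem add (hf : HasPuncturedPowerSeries f c) (hg : HasPuncturedPowerSeries g d) :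
    HasPuncturedPowerSeries (fun z => f z + g z) (fun n => c n + d n) := by
  filter_upwards [hf, hg] with z hfz hgz
  simpa only [add_mul] using hfz.add hgz

theorem neg (hf : HasPuncturedPowerSeries f c) :
    HasPuncturedPowerSeries (fun z => -f z) (fun n => -c n) := by
  filter_upwards [hf] with z hfz
  simpa only [neg_mul] using hfz.neg

theorem summable_norm (h : HasPuncturedPowerSeries f c) :
    ∀ᶠ z in 𝓝 0, Summable fun n => ‖c n * z ^ n‖ := by
  filter_upwards [eball_mem_nhds (0 : ℂ) h.radius_pos] with z hz
  rw [mem_eball, edist_zero_right, enorm_eq_nnnorm] at hz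
  simpa [ofScalars_norm, norm_mul, norm_pow] using (ofScalars ℂ c).summable_norm_mul_pow hz

theorem mul (hf : HasPuncturedPowerSeries f c) (hg : HasPuncturedPowerSeries g d) :
    HasPuncturedPowerSeries (fun z => f z * g z)
      (fun n => ∑ k ∈ Finset.range (n + 1), c k * d (n - k)) := by
  filter_upwards [hf, hg, nhdsWithin_le_nhds hf.summable_norm,
    nhdsWithin_le_nhds hg.summable_norm] with z hfz hgz hcz hdz
  have h := hasSum_sum_range_mul_of_summable_norm hcz hdz
  rw [hfz.tsum_eq, hgz.tsum_eq] at h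
  refine h.congr_fun fun n => ?_
  rw [Finset.sum_mul]
  refine Finset.sum_congr rfl fun k hk => ?_
  obtain ⟨m, rfl⟩ := Nat.exists_eq_add_of_le (Finset.mem_range_succ_iff.mp hk)
  rw [Nat.add_sub_cancel_left, pow_add]
  ring

theorem id_mul (hf : HasPuncturedPowerSeries f c) {d : ℕ → ℂ} (hd₀ : d 0 = 0)
    (hd : ∀ n, d (n + 1) = c n) : HasPuncturedPowerSeries (fun z => z * f z) d := by
  filter_upwards [hf] with z hfz
  have h : HasSum (fun n => d (n + 1) * z ^ (n + 1)) (z * f z) := by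
    simpa only [hd, pow_succ, mul_left_comm z, mul_comm z] using hfz.mul_left z
  simpa [hd₀] using HasSum.zero_add (f := fun n => d n * z ^ n) h

theorem mul_deriv (hf : HasPuncturedPowerSeries f c) :
    HasPuncturedPowerSeries (fun z => z * deriv f z) (fun n => n * c n) := by
  have hderiv : ∀ᶠ z in 𝓝[≠] 0, deriv f z = deriv (ofScalars ℂ c).sum z := by
    filter_upwards [eventually_eventually_nhdsWithin.2 hf.eventuallyEq_ofScalarsSum,
      self_mem_nhdsWithin] with z hz hz0
    rw [isOpen_compl_singleton.nhdsWithin_eq hz0] at hz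
    exact Filter.EventuallyEq.deriv_eq hz
  filter_upwards [hderiv, nhdsWithin_le_nhds (eball_mem_nhds (0 : ℂ) hf.radius_pos)]
    with z hz hzr
  rw [mem_eball, edist_zero_right, enorm_eq_nnnorm] at hzr
  rw [hz]
  exact hasSum_mul_deriv_ofScalarsSum hzr

end HasPuncturedPowerSeries

theorem eventually_nhdsNE_zero_add {G : Type*} [TopologicalSpace G] [AddGroup G]
    [IsTopologicalAddGroup G] {a : G} {p : G → Prop} (h : ∀ᶠ s in 𝓝[≠] a, p s) :
    ∀ᶠ z in 𝓝[≠] 0, p (a + z) := by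
  have hmap := (Homeomorph.addLeft a).map_punctured_nhds_eq 0
  simp only [Homeomorph.coe_addLeft, add_zero] at hmap
  rwa [← hmap, eventually_map] at h

theorem hasPuncturedPowerSeries_comp_add {f : ℂ → ℂ} {c : ℕ → ℂ} {a : ℂ}
    (h : ∃ r > (0 : ℝ), ∀ s ∈ ball a r \ {a}, HasSum (fun n => c n * (s - a) ^ n) (f s)) :
    HasPuncturedPowerSeries (fun z => f (a + z)) c := by
  obtain ⟨r, hr, h⟩ := h
  have : ∀ᶠ s in 𝓝[≠] a, HasSum (fun n => c n * (s - a) ^ n) (f s) :=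
    mem_of_superset (sdiff_mem_nhdsWithin_compl (ball_mem_nhds a hr) _) h
  simpa only [HasPuncturedPowerSeries, add_sub_cancel_left] using
    eventually_nhdsNE_zero_add this

theorem eventually_riemannZeta_one_add_ne_zero : ∀ᶠ z in 𝓝[≠] (0 : ℂ), riemannZeta (1 + z) ≠ 0 := by
  filter_upwards [eventually_nhdsNE_zero_add (riemannZeta_residue_one.eventually_ne one_ne_zero)]
    with z hz
  exact right_ne_zero_of_mul hz

theorem neg_one_pow_succ_mul_neg_one_pow_succ {R : Type*} [Ring R] {k n : ℕ} (hkn : k < n) :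
    (-1 : R) ^ (n + 1) * (-1) ^ (k + 1) = -(-1) ^ (n - k - 1) := by
  obtain ⟨m, rfl⟩ : ∃ m, n = m + k + 1 := ⟨n - k - 1, by omega⟩
  rw [← pow_add, show m + k + 1 + 1 + (k + 1) = m + 1 + 2 * (k + 1) by ring, pow_add, pow_mul,
    show m + k + 1 - k - 1 = m by omega]
  simp [pow_succ]

-- With `A = -ζ'/ζ - 1/z` and `G = ζ - 1/z`, this is `-ζ' = (A + 1/z) (G + 1/z)` multiplied by `z`.
theorem mul_deriv_riemannZeta_sub_inv {z : ℂ} (hz : z ≠ 0) (hζ : riemannZeta (1 + z) ≠ 0) :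
    z * deriv (fun w => riemannZeta (1 + w) - 1 / w) z =
      -((-deriv riemannZeta (1 + z) / riemannZeta (1 + z) - 1 / z) + (riemannZeta (1 + z) - 1 / z)
        + z * ((-deriv riemannZeta (1 + z) / riemannZeta (1 + z) - 1 / z)
          * (riemannZeta (1 + z) - 1 / z))) := by
  have hd : HasDerivAt (fun w => riemannZeta (1 + w) - 1 / w)
      (deriv riemannZeta (1 + z) - -(z ^ 2)⁻¹) z := by
    simp only [one_div]
    exact ((differentiableAt_riemannZeta (by simpa using hz)).hasDerivAt.comp_const_add 1 z).sub
      (hasDerivAt_inv hz)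
  rw [hd.deriv]
  field_simp
  ring

/-- If `η_n` are the Laurent coefficients of `−ζ'/ζ` at `s = 1` (beyond the simple pole
`1/(s−1)`), and `γ_n` are the Stieltjes constants, i.e.
`ζ(s) = 1/(s−1) + ∑ ((−1)^n/n!) γ_n (s−1)^n`, then for all `n ≥ 0`,
`η_n = (−1)^{n+1} [ ((n+1)/n!) γ_n + ∑_{k<n} ((−1)^{k−1}/(n−k−1)!) η_k γ_{n−k−1} ]`. -/
theorem stmt12 (η γ : ℕ → ℂ)
    (hη : ∃ r > (0 : ℝ), ∀ s ∈ ball (1 : ℂ) r \ {1},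
      HasSum (fun n : ℕ => η n * (s - 1) ^ n)
        (-deriv riemannZeta s / riemannZeta s - 1 / (s - 1)))
    (hγ : ∃ r > (0 : ℝ), ∀ s ∈ ball (1 : ℂ) r \ {1},
      HasSum (fun n : ℕ => ((-1 : ℂ) ^ n / n.factorial) * γ n * (s - 1) ^ n)
        (riemannZeta s - 1 / (s - 1))) :
    ∀ n : ℕ, η n = (-1 : ℂ) ^ (n + 1) *
      (((n : ℂ) + 1) / n.factorial * γ n +
        ∑ k ∈ Finset.range n, ((-1 : ℂ) ^ (k + 1) / (n - k - 1).factorial) * η k * γ (n - k - 1)) := by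
  set b : ℕ → ℂ := fun n => (-1 : ℂ) ^ n / n.factorial * γ n
  have hA := hasPuncturedPowerSeries_comp_add hη
  have hG : HasPuncturedPowerSeries (fun z => riemannZeta (1 + z) - 1 / z) b := by
    simpa only [add_sub_cancel_left] using hasPuncturedPowerSeries_comp_add hγ
  simp only [add_sub_cancel_left] at hA
  have hAG := (hA.mul hG).id_mul (d := fun n => ∑ k ∈ Finset.range n, η k * b (n - k - 1))
    (Finset.sum_range_zero _) fun n => Finset.sum_congr rfl fun k _ => by
      rw [Nat.sub_right_comm, Nat.add_sub_cancel]
  have hcoeff := hG.mul_deriv.unique ((hA.add hG).add hAG).neg <| by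
    filter_upwards [self_mem_nhdsWithin, eventually_riemannZeta_one_add_ne_zero] with z hz hζ
    exact mul_deriv_riemannZeta_sub_inv hz hζ
  intro n
  have hterm : ∀ k ∈ Finset.range n, (-1 : ℂ) ^ (n + 1) *
      ((-1) ^ (k + 1) / (n - k - 1).factorial * η k * γ (n - k - 1)) = -(η k * b (n - k - 1)) := by
    intro k hk
    linear_combination η k * γ (n - k - 1) / (n - k - 1).factorial *
      neg_one_pow_succ_mul_neg_one_pow_succ (R := ℂ) (Finset.mem_range.mp hk)
  rw [mul_add, Finset.mul_sum, Finset.sum_congr rfl hterm, Finset.sum_neg_distrib]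
  linear_combination congrFun hcoeff n
end

section
/- For Re(s) > 0 and reals a > 0, t > 0, one has t^{-s} = (1/Γ(s/2)) [ Γ(s/2, a t²) t^{-s} + ∫_0^a x^{s/2−1} e^{−t² x} dx ], where Γ(s,z) is the upper incomplete gamma function; consequently, for a sequence t_n > 0 with ∑ t_n^{-s} convergent, Z(s) = ∑_n Γ(s/2, a t_n²)/(Γ(s/2) t_n^s) + (1/Γ(s/2)) ∫_0^a x^{s/2−1} ∑_n e^{−t_n² x} dx. -/
open Filter Topology

/-- The upper incomplete gamma function `Γ(s, x) = ∫_x^∞ u^{s−1} e^{−u} du`. -/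
noncomputable def upperGamma (s : ℂ) (x : ℝ) : ℂ :=
  ∫ u in Set.Ioi x, (u : ℂ) ^ (s - 1) * Real.exp (-u)

/-! The substitution `u = c x` turns `∫₀^a x^{w-1} e^{-c x} dx` into `c^{-w} (Γ(w) - Γ(w, a c))`;
with `c = τ²` and `w = s/2` this is the first identity. For the second, sum the first over
`τ = t_n`: the integrals may be summed under the integral sign because
`∫₀^a |x^{s/2-1} e^{-t_n² x}| dx ≤ Γ(Re s / 2) t_n^{-Re s}`, which is summable in `n`. -/

open MeasureTheory Set

theorem ofReal_sq_cpow_div_two {τ : ℝ} (hτ : 0 ≤ τ) (z : ℂ) :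
    ((τ ^ 2 : ℝ) : ℂ) ^ (z / 2) = (τ : ℂ) ^ z := by
  rcases hτ.eq_or_lt with rfl | hτ
  · rcases eq_or_ne z 0 with rfl | hz <;> simp [*]
  rw [sq, Complex.ofReal_mul, Complex.mul_cpow_ofReal_nonneg hτ.le hτ.le,
    ← Complex.cpow_add _ _ (by exact_mod_cast hτ.ne'), add_halves]

theorem cpow_mul_exp_neg_mul_comp_mul_left (w : ℂ) {c x : ℝ} (hc : 0 ≤ c) (hx : 0 ≤ x) :
    ((c * x : ℝ) : ℂ) ^ (w - 1) * Real.exp (-(c * x)) =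
      (c : ℂ) ^ (w - 1) * ((x : ℂ) ^ (w - 1) * Real.exp (-c * x)) := by
  rw [Complex.ofReal_mul, Complex.mul_cpow_ofReal_nonneg hc hx, neg_mul, mul_assoc]

theorem integral_cpow_mul_exp_neg_mul_Ioi_eq_upperGamma (w : ℂ) {c X : ℝ} (hc : 0 < c)
    (hX : 0 ≤ X) :
    ∫ x in Ioi X, (x : ℂ) ^ (w - 1) * Real.exp (-c * x) = (c : ℂ) ^ (-w) * upperGamma w (X * c) := by
  have hc' : (c : ℂ) ≠ 0 := by exact_mod_cast hc.ne'
  have hsubst := integral_comp_mul_left_Ioi (fun u : ℝ => (u : ℂ) ^ (w - 1) * Real.exp (-u)) X hc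
  rw [setIntegral_congr_fun measurableSet_Ioi fun x (hx : X < x) =>
    cpow_mul_exp_neg_mul_comp_mul_left w hc.le (hX.trans hx.le), integral_const_mul,
    Complex.real_smul, Complex.ofReal_inv, mul_comm c X] at hsubst
  calc ∫ x in Ioi X, (x : ℂ) ^ (w - 1) * Real.exp (-c * x)
      = (c : ℂ) ^ (1 - w) * ((c : ℂ) ^ (w - 1) *
          ∫ x in Ioi X, (x : ℂ) ^ (w - 1) * Real.exp (-c * x)) := by
        rw [← mul_assoc, ← Complex.cpow_add _ _ hc', sub_add_sub_cancel', sub_self,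
          Complex.cpow_zero, one_mul]
    _ = (c : ℂ) ^ (-w) * upperGamma w (X * c) := by
        rw [hsubst, upperGamma, ← mul_assoc, ← Complex.cpow_neg_one, ← Complex.cpow_add _ _ hc']
        ring_nf

theorem integrableOn_cpow_mul_exp_neg_mul_Ioi {w : ℂ} (hw : 0 < w.re) {c : ℝ} (hc : 0 < c) :
    IntegrableOn (fun x : ℝ => (x : ℂ) ^ (w - 1) * Real.exp (-c * x)) (Ioi 0) := by
  have hΓ := Complex.GammaIntegral_convergent hw
  rw [← mul_zero c, ← integrableOn_Ioi_comp_mul_left_iff _ _ hc] at hΓ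
  refine IntegrableOn.congr_fun (hΓ.const_mul ((c : ℂ) ^ (1 - w))) (fun x (hx : 0 < x) => ?_)
    measurableSet_Ioi
  rw [mul_comm (Complex.ofReal _), cpow_mul_exp_neg_mul_comp_mul_left w hc.le hx.le, ← mul_assoc,
    ← Complex.cpow_add _ _ (by exact_mod_cast hc.ne'), sub_add_sub_cancel', sub_self,
    Complex.cpow_zero, one_mul]

theorem upperGamma_zero {w : ℂ} (hw : 0 < w.re) : upperGamma w 0 = Complex.Gamma w := by
  rw [Complex.Gamma_eq_integral hw, Complex.GammaIntegral, upperGamma]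
  exact setIntegral_congr_fun measurableSet_Ioi fun x _ => mul_comm _ _

theorem intervalIntegral_cpow_mul_exp_neg_mul {w : ℂ} (hw : 0 < w.re) {a c : ℝ} (ha : 0 ≤ a)
    (hc : 0 < c) :
    ∫ x in (0 : ℝ)..a, (x : ℂ) ^ (w - 1) * Real.exp (-c * x) =
      (c : ℂ) ^ (-w) * (Complex.Gamma w - upperGamma w (a * c)) := by
  rw [← intervalIntegral.integral_Ioi_sub_Ioi (integrableOn_cpow_mul_exp_neg_mul_Ioi hw hc) ha,
    integral_cpow_mul_exp_neg_mul_Ioi_eq_upperGamma w hc le_rfl,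
    integral_cpow_mul_exp_neg_mul_Ioi_eq_upperGamma w hc ha, zero_mul, upperGamma_zero hw, mul_sub]

theorem integral_norm_cpow_mul_exp_neg_mul_Ioc_le {w : ℂ} (hw : 0 < w.re) (a : ℝ) {c : ℝ}
    (hc : 0 < c) :
    ∫ x in Ioc 0 a, ‖(x : ℂ) ^ (w - 1) * Real.exp (-c * x)‖ ≤
      ‖(c : ℂ) ^ (-w)‖ * Real.Gamma w.re := by
  have hint := (integrableOn_cpow_mul_exp_neg_mul_Ioi hw hc).norm
  calc ∫ x in Ioc 0 a, ‖(x : ℂ) ^ (w - 1) * Real.exp (-c * x)‖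
      ≤ ∫ x in Ioi (0 : ℝ), ‖(x : ℂ) ^ (w - 1) * Real.exp (-c * x)‖ :=
        setIntegral_mono_set hint (Eventually.of_forall fun _ => norm_nonneg _)
          Ioc_subset_Ioi_self.eventuallyLE
    _ = ∫ x in Ioi (0 : ℝ), x ^ (w.re - 1) * Real.exp (-(c * x)) := by
        refine setIntegral_congr_fun measurableSet_Ioi fun x (hx : 0 < x) => ?_
        rw [norm_mul, Complex.norm_cpow_eq_rpow_re_of_pos hx, Complex.norm_real,
          Real.norm_of_nonneg (Real.exp_pos _).le, Complex.sub_re, Complex.one_re, neg_mul]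
    _ = ‖(c : ℂ) ^ (-w)‖ * Real.Gamma w.re := by
        rw [Real.integral_rpow_mul_exp_neg_mul_Ioi hw hc, Complex.norm_cpow_eq_rpow_re_of_pos hc,
          Complex.neg_re, Real.rpow_neg hc.le, one_div, Real.inv_rpow hc.le]

theorem hasSum_intervalIntegral_cpow_mul_exp_neg_mul {ι : Type*} [Countable ι] {w : ℂ}
    (hw : 0 < w.re) {a : ℝ} (ha : 0 ≤ a) {c : ι → ℝ} (hc : ∀ i, 0 < c i)
    (hsum : Summable fun i => ‖(c i : ℂ) ^ (-w)‖) :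
    HasSum (fun i => ∫ x in (0 : ℝ)..a, (x : ℂ) ^ (w - 1) * Real.exp (-c i * x))
      (∫ x in (0 : ℝ)..a, (x : ℂ) ^ (w - 1) * ∑' i, (Real.exp (-c i * x) : ℂ)) := by
  simp only [intervalIntegral.integral_of_le ha, ← tsum_mul_left]
  refine hasSum_integral_of_summable_integral_norm
    (fun i => (integrableOn_cpow_mul_exp_neg_mul_Ioi hw (hc i)).mono_set Ioc_subset_Ioi_self) ?_
  exact (hsum.mul_right (Real.Gamma w.re)).of_nonneg_of_le
    (fun i => integral_nonneg fun _ => norm_nonneg _)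
    (fun i => integral_norm_cpow_mul_exp_neg_mul_Ioc_le hw a (hc i))

theorem cpow_neg_eq_upperGamma_add_integral {s : ℂ} (hs : 0 < s.re) {a τ : ℝ} (ha : 0 ≤ a)
    (hτ : 0 < τ) :
    (τ : ℂ) ^ (-s) = (1 / Complex.Gamma (s / 2)) * (upperGamma (s / 2) (a * τ ^ 2) * (τ : ℂ) ^ (-s)
      + ∫ x in (0 : ℝ)..a, (x : ℂ) ^ (s / 2 - 1) * Real.exp (-(τ ^ 2) * x)) := by
  have hw : 0 < (s / 2).re := by rw [Complex.div_ofNat_re]; positivity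
  rw [intervalIntegral_cpow_mul_exp_neg_mul hw ha (by positivity), ← neg_div,
    ofReal_sq_cpow_div_two hτ.le]
  field_simp [Complex.Gamma_ne_zero_of_re_pos hw]
  ring

theorem stmt18_general (s : ℂ) (hs : 0 < s.re) (a : ℝ) (ha : 0 < a)
    (t : ℕ → ℝ) (htpos : ∀ n, 0 < t n)
    (hsum : Summable (fun n : ℕ => ((t n : ℂ)) ^ (-s))) :
    (∀ τ : ℝ, 0 < τ →
      ((τ : ℂ)) ^ (-s) = (1 / Complex.Gamma (s / 2)) *
        (upperGamma (s / 2) (a * τ ^ 2) * ((τ : ℂ)) ^ (-s)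
          + ∫ x in (0 : ℝ)..a, (x : ℂ) ^ (s / 2 - 1) * Complex.exp (-(τ : ℂ) ^ 2 * x))) ∧
    (∑' n : ℕ, ((t n : ℂ)) ^ (-s))
      = (∑' n : ℕ, upperGamma (s / 2) (a * (t n) ^ 2) / (Complex.Gamma (s / 2) * ((t n : ℂ)) ^ s))
        + (1 / Complex.Gamma (s / 2)) *
          ∫ x in (0 : ℝ)..a, (x : ℂ) ^ (s / 2 - 1) * ∑' n : ℕ, (Real.exp (-(t n) ^ 2 * x) : ℂ) := by
  have hw : 0 < (s / 2).re := by rw [Complex.div_ofNat_re]; positivity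
  refine ⟨fun τ hτ => ?_, ?_⟩
  · convert cpow_neg_eq_upperGamma_add_integral hs ha.le hτ using 6 with x
    push_cast
    ring_nf
  have hθ := hasSum_intervalIntegral_cpow_mul_exp_neg_mul hw ha.le
    (c := fun n => t n ^ 2) (fun n => pow_pos (htpos n) 2)
    (by simpa only [← neg_div, ofReal_sq_cpow_div_two (htpos _).le] using hsum.norm)
  have hupper := (hsum.hasSum.sub (hθ.mul_left (1 / Complex.Gamma (s / 2)))).tsum_eq
  have hterm n : upperGamma (s / 2) (a * t n ^ 2) / (Complex.Gamma (s / 2) * (t n : ℂ) ^ s) =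
      (t n : ℂ) ^ (-s) - 1 / Complex.Gamma (s / 2) *
        ∫ x in (0 : ℝ)..a, (x : ℂ) ^ (s / 2 - 1) * Real.exp (-(t n ^ 2) * x) := by
    rw [cpow_neg_eq_upperGamma_add_integral hs ha.le (htpos n), Complex.cpow_neg]
    ring
  rw [tsum_congr hterm, hupper]
  ring

/-- For `Re s > 0` and `a, t > 0`:
`t^{−s} = (1/Γ(s/2)) [ Γ(s/2, a t²) t^{−s} + ∫₀^a x^{s/2−1} e^{−t² x} dx ]`;
consequently for positive `t_n → ∞` with `∑ t_n^{−s}` convergent,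
`Z(s) = ∑_n Γ(s/2, a t_n²)/(Γ(s/2) t_n^s) + (1/Γ(s/2)) ∫₀^a x^{s/2−1} θ(x) dx`
where `θ(x) = ∑_n e^{−t_n² x}`. -/
theorem stmt18 (s : ℂ) (hs : 0 < s.re) (a : ℝ) (ha : 0 < a)
    (t : ℕ → ℝ) (htpos : ∀ n, 0 < t n) (htop : Tendsto t atTop atTop)
    (hsum : Summable (fun n : ℕ => ((t n : ℂ)) ^ (-s))) :
    (∀ τ : ℝ, 0 < τ →
      ((τ : ℂ)) ^ (-s) = (1 / Complex.Gamma (s / 2)) *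
        (upperGamma (s / 2) (a * τ ^ 2) * ((τ : ℂ)) ^ (-s)
          + ∫ x in (0 : ℝ)..a, (x : ℂ) ^ (s / 2 - 1) * Complex.exp (-(τ : ℂ) ^ 2 * x))) ∧
    (∑' n : ℕ, ((t n : ℂ)) ^ (-s))
      = (∑' n : ℕ, upperGamma (s / 2) (a * (t n) ^ 2) / (Complex.Gamma (s / 2) * ((t n : ℂ)) ^ s))
        + (1 / Complex.Gamma (s / 2)) *
          ∫ x in (0 : ℝ)..a, (x : ℂ) ^ (s / 2 - 1) * ∑' n : ℕ, (Real.exp (-(t n) ^ 2 * x) : ℂ) :=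
  stmt18_general s hs a ha t htpos hsum
end

section
/- Let (t_n) be a strictly increasing sequence of positive reals tending to infinity with ∑ t_n^{-σ} < ∞ for some σ. Then for Re(s) > σ, Γ(s/2) · ∑_{n=1}^∞ t_n^{-s} = ∫_0^∞ x^{s/2−1} θ(x) dx, where θ(x) = ∑_{n=1}^∞ e^{−t_n² x}. -/
open Filter Topology Set MeasureTheory

/-
Each term is a Gamma integral: substituting `x ↦ x / t²` in `Γ(s/2) = ∫ x^{s/2-1} e^{-x} dx`
gives `Γ(s/2) t^{-s} = ∫ x^{s/2-1} e^{-t² x} dx`. Summing over `n` and exchanging sum and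
integral is legitimate because the integrals of the absolute values sum to
`Γ(Re s/2) ∑ t_n^{-Re s} < ∞` (`hasSum_mellin`). Convergence of `θ` and of `∑ t_n^{-Re s}`
comes from comparison with `∑ t_n^{-σ}`, and since `t_n → ∞` that series can only converge
if `σ > 0`, so that `Re s > 0`.
-/

section GrowthOfSequences

variable {ι : Type*} {t : ι → ℝ} {σ : ℝ}

lemma pos_of_summable_rpow_neg [Infinite ι] (htop : Tendsto t cofinite atTop)
    (hσ : Summable fun i ↦ t i ^ (-σ)) : 0 < σ := by
  by_contra! h
  obtain ⟨i, hlt, hle⟩ := ((hσ.tendsto_cofinite_zero.eventually_lt_const one_pos).and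
    (htop.eventually_ge_atTop 1)).exists
  exact hlt.not_ge (Real.one_le_rpow hle (by linarith))

lemma Summable.rpow_neg_of_le (htop : Tendsto t cofinite atTop)
    (hσ : Summable fun i ↦ t i ^ (-σ)) {τ : ℝ} (hστ : σ ≤ τ) :
    Summable fun i ↦ t i ^ (-τ) := by
  refine hσ.of_norm_bounded_eventually ?_
  filter_upwards [htop.eventually_ge_atTop 1] with i hi
  rw [Real.norm_of_nonneg (Real.rpow_nonneg (by linarith) _)]
  exact Real.rpow_le_rpow_of_exponent_le hi (by linarith)

lemma summable_exp_neg_sq_mul (htop : Tendsto t cofinite atTop)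
    (hσ : Summable fun i ↦ t i ^ (-σ)) {x : ℝ} (hx : 0 < x) :
    Summable fun i ↦ Real.exp (-t i ^ 2 * x) := by
  have hdecay := (tendsto_rpow_mul_exp_neg_mul_atTop_nhds_zero σ x hx).comp htop
  refine hσ.of_norm_bounded_eventually ?_
  filter_upwards [hdecay.eventually_lt_const one_pos, htop.eventually_ge_atTop 1] with i hlt hi
  have hpow : 0 < t i ^ σ := Real.rpow_pos_of_pos (by linarith) σ
  simp only [Function.comp_apply] at hlt
  calc ‖Real.exp (-t i ^ 2 * x)‖ = Real.exp (-t i ^ 2 * x) :=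
        Real.norm_of_nonneg (Real.exp_nonneg _)
    _ ≤ Real.exp (-x * t i) := by
      have : x * t i ≤ x * t i ^ 2 := mul_le_mul_of_nonneg_left (by nlinarith) hx.le
      exact Real.exp_le_exp.2 (by linarith)
    _ ≤ t i ^ (-σ) := by
      rw [Real.rpow_neg (by linarith), inv_eq_one_div, le_div_iff₀ hpow]
      linarith

end GrowthOfSequences

lemma Complex.ofReal_sq_cpow_div_two {r : ℝ} (hr : 0 ≤ r) (s : ℂ) :
    ((r ^ 2 : ℝ) : ℂ) ^ (s / 2) = (r : ℂ) ^ s := by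
  rw [← Real.rpow_two, ← cpow_mul_ofReal_nonneg hr]
  push_cast
  ring_nf

lemma hasSum_mellin_exp_neg_sq_mul {ι : Type*} [Countable ι] {r : ι → ℝ}
    (hr : ∀ i, 0 < r i) {F : ℝ → ℂ} {s : ℂ} (hs : 0 < s.re)
    (hF : ∀ x ∈ Ioi 0, HasSum (fun i ↦ (Real.exp (-r i ^ 2 * x) : ℂ)) (F x))
    (h_sum : Summable fun i ↦ r i ^ (-s.re)) :
    HasSum (fun i ↦ Complex.Gamma (s / 2) * (r i : ℂ) ^ (-s)) (mellin F (s / 2)) := by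
  have hs' : 0 < (s / 2).re := by rw [Complex.div_ofNat_re]; positivity
  convert hasSum_mellin (a := fun _ ↦ 1) (fun i ↦ Or.inr (pow_pos (hr i) 2)) hs'
    (by simpa using hF) ?_ using 2 with i
  · rw [Complex.ofReal_sq_cpow_div_two (hr i).le, Complex.cpow_neg, mul_one, ← div_eq_mul_inv]
  · refine h_sum.congr fun i ↦ ?_
    rw [norm_one, one_div, ← Real.rpow_natCast, ← Real.rpow_mul (hr i).le,
      ← Real.rpow_neg (hr i).le, Complex.div_ofNat_re]
    ring_nf

theorem stmt19_general (t : ℕ → ℝ) (hpos : ∀ n, 0 < t n)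
    (htop : Tendsto t atTop atTop) (σ : ℝ)
    (hσ : Summable (fun n : ℕ => (t n) ^ (-σ))) :
    ∀ s : ℂ, σ < s.re →
      Complex.Gamma (s / 2) * ∑' n : ℕ, ((t n : ℂ)) ^ (-s)
        = ∫ x in Set.Ioi (0 : ℝ), (x : ℂ) ^ (s / 2 - 1) * ∑' n : ℕ, (Real.exp (-(t n) ^ 2 * x) : ℂ) := by
  intro s hs
  rw [← Nat.cofinite_eq_atTop] at htop
  have hσpos := pos_of_summable_rpow_neg htop hσ
  have hθ : ∀ x ∈ Ioi (0 : ℝ), HasSum (fun n ↦ (Real.exp (-t n ^ 2 * x) : ℂ))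
      (∑' n : ℕ, (Real.exp (-(t n) ^ 2 * x) : ℂ)) := fun x hx ↦
    (Complex.summable_ofReal.2 (summable_exp_neg_sq_mul htop hσ hx)).hasSum
  have hmellin :=
    hasSum_mellin_exp_neg_sq_mul hpos (by linarith) hθ (hσ.rpow_neg_of_le htop hs.le)
  rw [← tsum_mul_left, hmellin.tsum_eq, mellin]
  simp only [smul_eq_mul]

/-- Mellin transform representation: for a strictly increasing sequence of positive reals
`t_n → ∞` with `∑ t_n^{−σ} < ∞`, and any complex `s` with `Re s > σ`,
`Γ(s/2) ∑ t_n^{−s} = ∫₀^∞ x^{s/2−1} θ(x) dx` where `θ(x) = ∑ e^{−t_n² x}`. -/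
theorem stmt19 (t : ℕ → ℝ) (hmono : StrictMono t) (hpos : ∀ n, 0 < t n)
    (htop : Tendsto t atTop atTop) (σ : ℝ)
    (hσ : Summable (fun n : ℕ => (t n) ^ (-σ))) :
    ∀ s : ℂ, σ < s.re →
      Complex.Gamma (s / 2) * ∑' n : ℕ, ((t n : ℂ)) ^ (-s)
        = ∫ x in Set.Ioi (0 : ℝ), (x : ℂ) ^ (s / 2 - 1) * ∑' n : ℕ, (Real.exp (-(t n) ^ 2 * x) : ℂ) :=
  stmt19_general t hpos htop σ hσ
end
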